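/- arXiv:1801.07435 — 3 statements merged into one kernel-verified Lean document; each statement's English description precedes it below -/
import Mathlib

section
/- Let R > 0, and let G: [0,∞) → R be as in the Weinberger construction: G(r) = g(r) on [0,R] and G(r)=g(R) on [R,∞), where g solves g'' + ((N−1)/r)g' + (μ − (N−1)/r²)g = 0 on (0,R) with g(0)=0, g'(R)=0, g>0 and g'>0 on (0,R), and μ = μ₁(B_R) is the first nonzero Neumann eigenvalue of the ball B_R. Then the function r ↦ G'(r)² + (N−1)G(r)²/r² is (weakly) decreasing on (0,∞). -/
/-!
On `(0, R)` the ODE turns the derivative of the energy `g'² + (N-1) g²/r²` into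
`-2μ g g' - 2(N-1)(g - r g')²/r³ ≤ 0`, using `μ ≥ 0` and `g g' > 0`. On `[R, ∞)` the profile is
the constant `g(R)`, so the energy is `(N-1) g(R)²/r²`, which decreases. The two pieces meet at
`r = R` because `g'(R) = 0` makes the glued profile differentiable there with derivative `0`.
-/

open MeasureTheory Metric
open scoped RealInnerProductSpace

/-- Variational (min-max) definition of the `k`-th Neumann eigenvalue of a domain
`Ω ⊂ ℝ^N` (counting `μ₀ = 0`, so `k = 1` is the first nonzero eigenvalue for
connected `Ω`): the infimum of the numbers `m ≥ 0` bounding the Rayleigh quotient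
on some `k`-dimensional subspace of mean-zero test functions. -/
noncomputable def neumannEV {N : ℕ} (Ω : Set (EuclideanSpace ℝ (Fin N))) (k : ℕ) : ℝ :=
  sInf { m : ℝ | 0 ≤ m ∧
    ∃ S : Submodule ℝ (EuclideanSpace ℝ (Fin N) → ℝ),
      Module.finrank ℝ S = k ∧
      (∀ u ∈ S, ContDiff ℝ 1 u ∧ (∫ x in Ω, u x) = 0) ∧
      (∀ u ∈ S, (∫ x in Ω, ‖fderiv ℝ u x‖ ^ 2) ≤ m * ∫ x in Ω, (u x) ^ 2) }

open Set Filter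

lemma neumannEV_nonneg {N : ℕ} (Ω : Set (EuclideanSpace ℝ (Fin N))) (k : ℕ) :
    0 ≤ neumannEV Ω k :=
  Real.sInf_nonneg fun _ hm => hm.1

noncomputable def radialEnergy (n : ℝ) (u : ℝ → ℝ) (r : ℝ) : ℝ :=
  deriv u r ^ 2 + n * u r ^ 2 / r ^ 2

section RadialEnergy

variable {n : ℝ} {u : ℝ → ℝ}

lemma hasDerivAt_radialEnergy {r : ℝ} (hu : DifferentiableAt ℝ u r)
    (hu' : DifferentiableAt ℝ (deriv u) r) (hr : r ≠ 0) :
    HasDerivAt (radialEnergy n u)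
      (2 * deriv u r * deriv (deriv u) r + 2 * n * u r * deriv u r / r ^ 2
        - 2 * n * u r ^ 2 / r ^ 3) r := by
  have h := (hu'.hasDerivAt.fun_pow 2).add
    ((hu.hasDerivAt.fun_pow 2).const_mul n |>.div (hasDerivAt_pow 2 r) (pow_ne_zero 2 hr))
  refine h.congr_deriv ?_
  field_simp
  ring

lemma radialEnergy_deriv_eq_of_ode {μ r a b c : ℝ} (hr : r ≠ 0)
    (hode : c + n / r * b + (μ - n / r ^ 2) * a = 0) :
    2 * b * c + 2 * n * a * b / r ^ 2 - 2 * n * a ^ 2 / r ^ 3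
      = -2 * (μ * (a * b)) - 2 * (n * (a - r * b) ^ 2 / r ^ 3) := by
  have hc : c = -(n / r * b) - (μ - n / r ^ 2) * a := by linarith
  subst hc
  field_simp
  ring

theorem antitoneOn_radialEnergy_of_ode {μ R : ℝ} (hμ : 0 ≤ μ) (hn : 0 ≤ n)
    (hu : ContDiffOn ℝ 2 u (Ioi 0))
    (hode : ∀ r ∈ Ioo 0 R, deriv (deriv u) r + n / r * deriv u r + (μ - n / r ^ 2) * u r = 0)
    (huu' : ∀ r ∈ Ioo 0 R, 0 ≤ u r * deriv u r) :
    AntitoneOn (radialEnergy n u) (Ioc 0 R) := by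
  have hu' : ContDiffOn ℝ 1 (deriv u) (Ioi 0) := hu.deriv_of_isOpen isOpen_Ioi (by norm_num)
  have hderiv : ∀ r ∈ Ioi (0 : ℝ), HasDerivAt (radialEnergy n u)
      (2 * deriv u r * deriv (deriv u) r + 2 * n * u r * deriv u r / r ^ 2
        - 2 * n * u r ^ 2 / r ^ 3) r := fun r hr =>
    hasDerivAt_radialEnergy
      ((hu.contDiffAt (isOpen_Ioi.mem_nhds hr)).differentiableAt (by norm_num))
      ((hu'.contDiffAt (isOpen_Ioi.mem_nhds hr)).differentiableAt (by norm_num)) hr.ne'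
  refine antitoneOn_of_hasDerivWithinAt_nonpos (convex_Ioc 0 R)
    (fun r hr => (hderiv r hr.1).continuousAt.continuousWithinAt)
    (fun r hr => (hderiv r (interior_subset hr).1).hasDerivWithinAt) ?_
  rw [interior_Ioc]
  intro r hr
  rw [radialEnergy_deriv_eq_of_ode hr.1.ne' (hode r hr)]
  have hμuu' : 0 ≤ μ * (u r * deriv u r) := mul_nonneg hμ (huu' r hr)
  have hsq : 0 ≤ n * (u r - r * deriv u r) ^ 2 / r ^ 3 := by
    have := hr.1
    positivity
  linarith

end RadialEnergy

section FrozenProfile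

variable {g G : ℝ → ℝ} {a R : ℝ}

lemma hasDerivAt_zero_of_eqOn_Icc_of_const_Ici (ha : a < R) (hgR : HasDerivAt g 0 R)
    (hG₁ : EqOn G g (Icc a R)) (hG₂ : ∀ r, R ≤ r → G r = g R) : HasDerivAt G 0 R := by
  have hleft : HasDerivWithinAt G 0 (Iic R) R :=
    hgR.hasDerivWithinAt.congr_of_eventuallyEq
      (eventually_of_mem (Icc_mem_nhdsLE ha) hG₁) (hG₁ ⟨ha.le, le_rfl⟩)
  have hright : HasDerivWithinAt G 0 (Ici R) R :=
    (hasDerivAt_const R (g R)).hasDerivWithinAt.congr hG₂ (hG₂ R le_rfl)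
  simpa [Iic_union_Ici] using hleft.union hright

lemma radialEnergy_eqOn_Ioc_of_eqOn_Icc (n : ℝ) (ha : a < R) (hgR : HasDerivAt g 0 R)
    (hG₁ : EqOn G g (Icc a R)) (hG₂ : ∀ r, R ≤ r → G r = g R) :
    EqOn (radialEnergy n G) (radialEnergy n g) (Ioc a R) := by
  intro r hr
  have hderiv : deriv G r = deriv g r := by
    rcases hr.2.lt_or_eq with hlt | rfl
    · exact EventuallyEq.deriv_eq (eventually_of_mem (Icc_mem_nhds hr.1 hlt) hG₁)
    · rw [(hasDerivAt_zero_of_eqOn_Icc_of_const_Ici ha hgR hG₁ hG₂).deriv, hgR.deriv]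
  rw [radialEnergy, radialEnergy, hderiv, hG₁ (Ioc_subset_Icc_self hr)]

lemma radialEnergy_of_const_Ici (n : ℝ) (ha : a < R) (hgR : HasDerivAt g 0 R)
    (hG₁ : EqOn G g (Icc a R)) (hG₂ : ∀ r, R ≤ r → G r = g R) {r : ℝ} (hr : R ≤ r) :
    radialEnergy n G r = n * g R ^ 2 / r ^ 2 := by
  have hderiv : deriv G r = 0 := by
    rcases hr.lt_or_eq with hlt | rfl
    · rw [EventuallyEq.deriv_eq
        (eventually_of_mem (Ioi_mem_nhds hlt) fun x hx => hG₂ x (le_of_lt hx)),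
        deriv_const]
    · exact (hasDerivAt_zero_of_eqOn_Icc_of_const_Ici ha hgR hG₁ hG₂).deriv
  rw [radialEnergy, hderiv, hG₂ r hr]
  ring

end FrozenProfile

lemma antitoneOn_div_sq {c : ℝ} (hc : 0 ≤ c) : AntitoneOn (fun r : ℝ => c / r ^ 2) (Ioi 0) :=
  fun _ hx _ _ hxy => div_le_div_of_nonneg_left hc (pow_pos hx 2) (pow_le_pow_left₀ hx.le hxy 2)

theorem stmt4_general {N : ℕ} (hN : 2 ≤ N) (R : ℝ) (hR : 0 < R)
    (g G : ℝ → ℝ) (hg : ContDiffOn ℝ 2 g (Set.Ici 0))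
    (hODE : ∀ r ∈ Set.Ioo (0 : ℝ) R,
      deriv (deriv g) r + ((N - 1 : ℝ) / r) * deriv g r +
        (neumannEV (ball (0 : EuclideanSpace ℝ (Fin N)) R) 1 - (N - 1 : ℝ) / r ^ 2) * g r = 0)
    (hg'R : deriv g R = 0)
    (hgpos : ∀ r ∈ Set.Ioo (0 : ℝ) R, 0 < g r)
    (hg'pos : ∀ r ∈ Set.Ioo (0 : ℝ) R, 0 < deriv g r)
    (hG₁ : ∀ r ∈ Set.Icc (0 : ℝ) R, G r = g r)
    (hG₂ : ∀ r, R ≤ r → G r = g R) :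
    AntitoneOn (fun r : ℝ => (deriv G r) ^ 2 + (N - 1 : ℝ) * (G r) ^ 2 / r ^ 2)
      (Set.Ioi 0) := by
  have hn : (0 : ℝ) ≤ N - 1 := by
    have : (2 : ℝ) ≤ N := by exact_mod_cast hN
    linarith
  have hgR : HasDerivAt g 0 R :=
    hg'R ▸ ((hg.contDiffAt (Ici_mem_nhds hR)).differentiableAt (by norm_num)).hasDerivAt
  have hinner : AntitoneOn (radialEnergy (N - 1) G) (Ioc 0 R) :=
    (antitoneOn_radialEnergy_of_ode (neumannEV_nonneg _ 1) hn (hg.mono Ioi_subset_Ici_self) hODE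
      fun r hr => (mul_pos (hgpos r hr) (hg'pos r hr)).le).congr
      (radialEnergy_eqOn_Ioc_of_eqOn_Icc _ hR hgR hG₁ hG₂).symm
  have houter : AntitoneOn (radialEnergy (N - 1) G) (Ici R) :=
    ((antitoneOn_div_sq (by positivity)).mono (Ici_subset_Ioi.mpr hR)).congr
      fun r hr => (radialEnergy_of_const_Ici _ hR hgR hG₁ hG₂ hr).symm
  rw [← Ioc_union_Ici_eq_Ioi hR]
  exact hinner.union_right houter (isGreatest_Ioc hR) isLeast_Ici

/-- if `g` solves the Weinberger ODE
`g'' + ((N-1)/r) g' + (μ - (N-1)/r²) g = 0` on `(0,R)` with `μ = μ₁(B_R)`,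
`g(0)=0`, `g'(R)=0`, `g > 0` and `g' > 0` on `(0,R)`, and `G` is the profile equal to
`g` on `[0,R]` and to `g(R)` afterwards, then `r ↦ G'(r)² + (N-1)G(r)²/r²`
is weakly decreasing on `(0,∞)`. -/
theorem stmt4 {N : ℕ} (hN : 2 ≤ N) (R : ℝ) (hR : 0 < R)
    (g G : ℝ → ℝ) (hg : ContDiffOn ℝ 2 g (Set.Ici 0))
    (hODE : ∀ r ∈ Set.Ioo (0 : ℝ) R,
      deriv (deriv g) r + ((N - 1 : ℝ) / r) * deriv g r +
        (neumannEV (ball (0 : EuclideanSpace ℝ (Fin N)) R) 1 - (N - 1 : ℝ) / r ^ 2) * g r = 0)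
    (hg0 : g 0 = 0) (hg'R : deriv g R = 0)
    (hgpos : ∀ r ∈ Set.Ioo (0 : ℝ) R, 0 < g r)
    (hg'pos : ∀ r ∈ Set.Ioo (0 : ℝ) R, 0 < deriv g r)
    (hG₁ : ∀ r ∈ Set.Icc (0 : ℝ) R, G r = g r)
    (hG₂ : ∀ r, R ≤ r → G r = g R) :
    AntitoneOn (fun r : ℝ => (deriv G r) ^ 2 + (N - 1 : ℝ) * (G r) ^ 2 / r ^ 2)
      (Set.Ioi 0) :=
  stmt4_general hN R hR g G hg hODE hg'R hgpos hg'pos hG₁ hG₂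
end

section
/- Let Ω ⊂ R^N be a measurable set with |Ω| = |B_{A,R}| for a ball B_{A,R} centered at A of radius R. Let F: [0,∞) → (0,∞) be decreasing and H: [0,∞) → (0,∞) be increasing with H strictly increasing on [0,R] and constant on [R,∞). Then ∫_Ω F(d_A(x)) dx / ∫_Ω H(d_A(x)) dx ≤ ∫_{B_{A,R}} F(d_A(x)) dx / ∫_{B_{A,R}} H(d_A(x)) dx, where d_A(x) = ‖x−A‖. (Mass displacement lemma: moving mass from outside the ball to inside increases the numerator and decreases the denominator.) -/
open MeasureTheory Metric

/-! The pieces `Ω \ B` and `B \ Ω` of the symmetric difference have equal measure, and the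
radius `R` separates them: on `Ω \ B` we have `F(d_A) ≤ F(R)` and `H(d_A) = H(R)`, while on
`B \ Ω` we have `F(d_A) ≥ F(R)` and `H(d_A) ≤ H(R)`. Trading the first piece for the second
therefore can only raise `∫ F(d_A)` and lower `∫ H(d_A)`. -/

open Set ENNReal in
theorem MeasureTheory.setIntegral_le_setIntegral_of_le_of_le_on_sdiff {α : Type*}
    [MeasurableSpace α] {μ : Measure α} {s t : Set α} {f : α → ℝ} (c : ℝ)
    (hs : MeasurableSet s) (ht : MeasurableSet t) (hst : μ s = μ t) (hfin : μ s ≠ ∞)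
    (hfs : IntegrableOn f s μ) (hft : IntegrableOn f t μ)
    (h_out : ∀ x ∈ s \ t, f x ≤ c) (h_in : ∀ x ∈ t \ s, c ≤ f x) :
    ∫ x in s, f x ∂μ ≤ ∫ x in t, f x ∂μ := by
  have hfin' : μ t ≠ ∞ := hst ▸ hfin
  have hsdiff : μ (s \ t) = μ (t \ s) := measure_sdiff_symm hs.nullMeasurableSet
    ht.nullMeasurableSet hst (measure_ne_top_of_subset inter_subset_left hfin)
  calc ∫ x in s, f x ∂μ = ∫ x in s ∩ t, f x ∂μ + ∫ x in s \ t, f x ∂μ :=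
        (integral_inter_add_sdiff ht hfs).symm
    _ ≤ ∫ x in s ∩ t, f x ∂μ + ∫ _ in s \ t, c ∂μ := by
        grw [setIntegral_mono_on (hfs.mono_set sdiff_subset)
          (integrableOn_const (measure_ne_top_of_subset sdiff_subset hfin)) (hs.diff ht) h_out]
    _ = ∫ x in t ∩ s, f x ∂μ + ∫ _ in t \ s, c ∂μ := by
        rw [inter_comm, setIntegral_const, setIntegral_const, measureReal_def, measureReal_def,
          hsdiff]
    _ ≤ ∫ x in t ∩ s, f x ∂μ + ∫ x in t \ s, f x ∂μ := by
        grw [setIntegral_mono_on (integrableOn_const (measure_ne_top_of_subset sdiff_subset hfin'))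
          (hft.mono_set sdiff_subset) (ht.diff hs) h_in]
    _ = ∫ x in t, f x ∂μ := integral_inter_add_sdiff hs hft

theorem MonotoneOn.measurable_comp_of_nonneg {α : Type*} [MeasurableSpace α] {φ : ℝ → ℝ}
    (hφ : MonotoneOn φ (Set.Ici 0)) {g : α → ℝ} (hg : Measurable g) (hg0 : ∀ x, 0 ≤ g x) :
    Measurable fun x ↦ φ (g x) := by
  have hmono : Monotone fun r ↦ φ (max r 0) := fun a b hab ↦
    hφ (le_max_right a 0) (le_max_right b 0) (max_le_max_right 0 hab)
  simpa only [Function.comp_def, max_eq_left (hg0 _)] using hmono.measurable.comp hg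

section NormSub

variable {E : Type*} [NormedAddCommGroup E] [MeasurableSpace E] [OpensMeasurableSpace E]
  {μ : Measure E} {s : Set E} {φ : ℝ → ℝ} {C : ℝ}

theorem MonotoneOn.integrableOn_comp_norm_sub (hφ : MonotoneOn φ (Set.Ici 0))
    (hC : ∀ r, 0 ≤ r → φ r ≤ C) (hs : μ s ≠ ⊤) (A : E) :
    IntegrableOn (fun x ↦ φ ‖x - A‖) s μ := by
  have hmeas : Measurable fun x ↦ φ ‖x - A‖ := hφ.measurable_comp_of_nonneg
    (continuous_id.sub continuous_const).norm.measurable fun x ↦ norm_nonneg _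
  refine Measure.integrableOn_of_bounded (M := max |φ 0| |C|) hs hmeas.aestronglyMeasurable
    (ae_of_all _ fun x ↦ ?_)
  have hx := norm_nonneg (x - A)
  exact abs_le_max_abs_abs (hφ Set.self_mem_Ici hx hx) (hC _ hx)

theorem AntitoneOn.integrableOn_comp_norm_sub (hφ : AntitoneOn φ (Set.Ici 0))
    (hC : ∀ r, 0 ≤ r → C ≤ φ r) (hs : μ s ≠ ⊤) (A : E) :
    IntegrableOn (fun x ↦ φ ‖x - A‖) s μ := by
  simpa using (hφ.neg.integrableOn_comp_norm_sub (C := -C) (fun r hr ↦ neg_le_neg (hC r hr))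
    hs A).neg

end NormSub

theorem stmt5_general {N : ℕ} (A : EuclideanSpace ℝ (Fin N)) (R : ℝ) (hR : 0 < R)
    (Ω : Set (EuclideanSpace ℝ (Fin N))) (hΩmeas : MeasurableSet Ω)
    (hvol : volume Ω = volume (ball A R))
    (F H : ℝ → ℝ)
    (hFpos : ∀ r, 0 ≤ r → 0 < F r)
    (hFdec : AntitoneOn F (Set.Ici 0))
    (hHpos : ∀ r, 0 ≤ r → 0 < H r)
    (hHinc : MonotoneOn H (Set.Ici 0))
    (hHconst : ∀ r, R ≤ r → H r = H R) :
    (∫ x in Ω, F ‖x - A‖) / (∫ x in Ω, H ‖x - A‖) ≤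
      (∫ x in ball A R, F ‖x - A‖) / (∫ x in ball A R, H ‖x - A‖) := by
  have hBfin : volume (ball A R) ≠ ⊤ := measure_ball_lt_top.ne
  have hΩfin : volume Ω ≠ ⊤ := hvol ▸ hBfin
  have hHle : ∀ r, 0 ≤ r → H r ≤ H R := fun r hr ↦ (le_total r R).elim
    (hHinc hr hR.le) (fun h ↦ (hHconst r h).le)
  have hFint {s} (hs : volume s ≠ ⊤) : IntegrableOn (fun x ↦ F ‖x - A‖) s :=
    hFdec.integrableOn_comp_norm_sub (fun r hr ↦ (hFpos r hr).le) hs A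
  have hHint {s} (hs : volume s ≠ ⊤) : IntegrableOn (fun x ↦ H ‖x - A‖) s :=
    hHinc.integrableOn_comp_norm_sub hHle hs A
  have hout {x} (hx : x ∉ ball A R) : R ≤ ‖x - A‖ := by simpa [dist_eq_norm] using hx
  have hin {x} (hx : x ∈ ball A R) : ‖x - A‖ ≤ R := (mem_ball_iff_norm.1 hx).le
  have hF_le : ∫ x in Ω, F ‖x - A‖ ≤ ∫ x in ball A R, F ‖x - A‖ :=
    setIntegral_le_setIntegral_of_le_of_le_on_sdiff (F R) hΩmeas measurableSet_ball hvol hΩfin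
      (hFint hΩfin) (hFint hBfin) (fun x hx ↦ hFdec hR.le (norm_nonneg _) (hout hx.2))
      (fun x hx ↦ hFdec (norm_nonneg _) hR.le (hin hx.1))
  have hH_le : ∫ x in ball A R, H ‖x - A‖ ≤ ∫ x in Ω, H ‖x - A‖ :=
    setIntegral_le_setIntegral_of_le_of_le_on_sdiff (H R) measurableSet_ball hΩmeas hvol.symm
      hBfin (hHint hBfin) (hHint hΩfin) (fun x _ ↦ hHle _ (norm_nonneg _))
      (fun x hx ↦ (hHconst _ (hout hx.2)).ge)
  have hH_pos : 0 < ∫ x in ball A R, H ‖x - A‖ := by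
    refine (setIntegral_pos_iff_support_of_nonneg_ae
      (ae_of_all _ fun x ↦ (hHpos _ (norm_nonneg _)).le) (hHint hBfin)).2 ?_
    rw [Function.support_eq_univ fun x ↦ (hHpos _ (norm_nonneg _)).ne', Set.univ_inter]
    exact measure_ball_pos volume A hR
  exact div_le_div₀ (setIntegral_nonneg measurableSet_ball fun x _ ↦ (hFpos _ (norm_nonneg _)).le)
    hF_le hH_pos hH_le

/-- mass displacement lemma: if `|Ω| = |B(A,R)|`, `F` is positive
decreasing and `H` is positive increasing (strictly on `[0,R]`, constant on `[R,∞)`),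
then the quotient `∫_Ω F(d_A)/∫_Ω H(d_A)` is at most the corresponding quotient
over the ball `B(A,R)`. -/
theorem stmt5 {N : ℕ} (hN : 1 ≤ N) (A : EuclideanSpace ℝ (Fin N)) (R : ℝ) (hR : 0 < R)
    (Ω : Set (EuclideanSpace ℝ (Fin N))) (hΩmeas : MeasurableSet Ω)
    (hΩbdd : Bornology.IsBounded Ω)
    (hvol : volume Ω = volume (ball A R))
    (F H : ℝ → ℝ)
    (hFpos : ∀ r, 0 ≤ r → 0 < F r)
    (hFdec : AntitoneOn F (Set.Ici 0))
    (hHpos : ∀ r, 0 ≤ r → 0 < H r)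
    (hHinc : MonotoneOn H (Set.Ici 0))
    (hHstrict : StrictMonoOn H (Set.Icc 0 R))
    (hHconst : ∀ r, R ≤ r → H r = H R) :
    (∫ x in Ω, F ‖x - A‖) / (∫ x in Ω, H ‖x - A‖) ≤
      (∫ x in ball A R, F ‖x - A‖) / (∫ x in ball A R, H ‖x - A‖) :=
  stmt5_general A R hR Ω hΩmeas hvol F H hFpos hFdec hHpos hHinc hHconst
end

section
/- The sharp bound |Ω|^{2/N} μ₂(Ω) ≤ μ₂* = 2^{2/N}|B|^{2/N}μ₁(B) implies the Pólya conjecture for k = 2: for every bounded regular (Lipschitz) open set Ω ⊂ R^N, μ₂(Ω) ≤ 4π² (2/(ω_N |Ω|))^{2/N}. Equivalently, one must verify the numerical inequality 2^{2/N} ω_N^{2/N} μ₁(B₁) ≤ 4π² (2/ω_N)^{2/N}, i.e. μ₁(B₁) ≤ 4π²/ω_N^{4/N}, where B₁ is the unit ball and ω_N = |B₁|. -/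
open MeasureTheory Metric Real

theorem rpow_mul_rpow_mul_div_rpow_two_mul {a w : ℝ} (ha : 0 < a) (hw : 0 < w) (c t : ℝ) :
    2 ^ t * w ^ t * (c / w ^ (2 * t)) = c * (2 / (w * a)) ^ t * a ^ t := by
  have : 0 < w ^ t := rpow_pos_of_pos hw t
  have : 0 < a ^ t := rpow_pos_of_pos ha t
  rw [div_rpow zero_le_two (by positivity), mul_rpow hw.le ha.le, two_mul, rpow_add hw]
  field_simp

theorem IsOpen.toReal_measure_pos_of_isBounded {X : Type*} [PseudoMetricSpace X] [ProperSpace X]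
    [MeasurableSpace X] {μ : Measure X} [μ.IsOpenPosMeasure] [IsFiniteMeasureOnCompacts μ]
    {U : Set X} (hU : IsOpen U) (hB : Bornology.IsBounded U) (hne : U.Nonempty) :
    0 < (μ U).toReal :=
  ENNReal.toReal_pos (hU.measure_pos μ hne).ne' hB.measure_lt_top.ne

theorem stmt12_general {N : ℕ}
    (hmain : ∀ Ω : Set (EuclideanSpace ℝ (Fin N)),
      IsOpen Ω → Bornology.IsBounded Ω → Ω.Nonempty →
      (volume Ω).toReal ^ ((2 : ℝ) / N) * neumannEV Ω 2 ≤
        2 ^ ((2 : ℝ) / N) *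
          (volume (ball (0 : EuclideanSpace ℝ (Fin N)) 1)).toReal ^ ((2 : ℝ) / N) *
          neumannEV (ball (0 : EuclideanSpace ℝ (Fin N)) 1) 1)
    (hnum : neumannEV (ball (0 : EuclideanSpace ℝ (Fin N)) 1) 1 ≤
      4 * π ^ 2 /
        (volume (ball (0 : EuclideanSpace ℝ (Fin N)) 1)).toReal ^ ((4 : ℝ) / N)) :
    ∀ Ω : Set (EuclideanSpace ℝ (Fin N)),
      IsOpen Ω → Bornology.IsBounded Ω → Ω.Nonempty →
      neumannEV Ω 2 ≤
        4 * π ^ 2 *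
          (2 / ((volume (ball (0 : EuclideanSpace ℝ (Fin N)) 1)).toReal *
            (volume Ω).toReal)) ^ ((2 : ℝ) / N) := by
  intro Ω hO hB hne
  set B := ball (0 : EuclideanSpace ℝ (Fin N)) 1
  have ha : 0 < (volume Ω).toReal := hO.toReal_measure_pos_of_isBounded hB hne
  have hw : 0 < (volume B).toReal :=
    isOpen_ball.toReal_measure_pos_of_isBounded isBounded_ball (nonempty_ball.2 one_pos)
  rw [show (4 : ℝ) / N = 2 * (2 / N) by ring] at hnum
  rw [← mul_le_mul_iff_right₀ (rpow_pos_of_pos ha ((2 : ℝ) / N))]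
  calc (volume Ω).toReal ^ ((2 : ℝ) / N) * neumannEV Ω 2
      ≤ 2 ^ ((2 : ℝ) / N) * (volume B).toReal ^ ((2 : ℝ) / N) * neumannEV B 1 := hmain Ω hO hB hne
    _ ≤ 2 ^ ((2 : ℝ) / N) * (volume B).toReal ^ ((2 : ℝ) / N) *
          (4 * π ^ 2 / (volume B).toReal ^ (2 * ((2 : ℝ) / N))) := by
        gcongr
    _ = _ := by
        rw [rpow_mul_rpow_mul_div_rpow_two_mul ha hw, mul_comm ((volume Ω).toReal ^ _)]

/-- the sharp bound `|Ω|^{2/N}μ₂(Ω) ≤ μ₂* = 2^{2/N}ω_N^{2/N}μ₁(B₁)`,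
together with the numerical inequality `μ₁(B₁) ≤ 4π²/ω_N^{4/N}` (Pólya for `k = 1`
on the ball), implies the Pólya conjecture for `k = 2`:
`μ₂(Ω) ≤ 4π²(2/(ω_N|Ω|))^{2/N}` for every bounded regular open `Ω ⊂ ℝ^N`. -/
theorem stmt12 {N : ℕ} (hN : 1 ≤ N)
    (hmain : ∀ Ω : Set (EuclideanSpace ℝ (Fin N)),
      IsOpen Ω → Bornology.IsBounded Ω → Ω.Nonempty →
      (volume Ω).toReal ^ ((2 : ℝ) / N) * neumannEV Ω 2 ≤
        2 ^ ((2 : ℝ) / N) *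
          (volume (ball (0 : EuclideanSpace ℝ (Fin N)) 1)).toReal ^ ((2 : ℝ) / N) *
          neumannEV (ball (0 : EuclideanSpace ℝ (Fin N)) 1) 1)
    (hnum : neumannEV (ball (0 : EuclideanSpace ℝ (Fin N)) 1) 1 ≤
      4 * π ^ 2 /
        (volume (ball (0 : EuclideanSpace ℝ (Fin N)) 1)).toReal ^ ((4 : ℝ) / N)) :
    ∀ Ω : Set (EuclideanSpace ℝ (Fin N)),
      IsOpen Ω → Bornology.IsBounded Ω → Ω.Nonempty →
      neumannEV Ω 2 ≤
        4 * π ^ 2 *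
          (2 / ((volume (ball (0 : EuclideanSpace ℝ (Fin N)) 1)).toReal *
            (volume Ω).toReal)) ^ ((2 : ℝ) / N) :=
  stmt12_general hmain hnum
end
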